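/- arXiv:0807.3454 — 3 statements merged into one kernel-verified Lean document; each statement's English description precedes it below -/
import Mathlib

section
/- Canonical decomposition of the stress tensor (Eqs. (9)–(11)). Let ρ₀ > 0, let F be an invertible real 3×3 matrix, and set C = Fᵀ F (so det C = (det F)² > 0) and ρ = ρ₀ (det C)^{-1/2}. Let g : ℝ × (3×3 matrices) → ℝ be differentiable at (ρ, C), with g(r, ·) positively homogeneous of degree zero in its matrix argument for every r. Define e on matrices near C by e(C) = g(ρ₀ (det C)^{-1/2}, C). Suppose E and G are 3×3 matrices representing derivatives via the trace pairing: (fderiv e C)(H) = tr(E H) for all H, and the partial Fréchet derivative of g with respect to its matrix argument at (ρ, C) in direction H equals tr(G H) for all H; let g_ρ denote the partial derivative of g with respect to its first (scalar) argument at (ρ, C). Then the stress tensor σ := 2ρ F E Fᵀ satisfies σ = -p I + σ₁ with p = ρ² g_ρ, σ₁ = 2ρ F G Fᵀ, and tr σ₁ = 0, where I is the 3×3 identity matrix. -/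
open Matrix

attribute [local instance] Matrix.normedAddCommGroup Matrix.normedSpace

/-! Since `ρ` depends on `C` only through `det C`, the chain rule splits `∂e/∂C` into
`g_ρ · ∂ρ/∂C` plus the partial derivative `G`. Jacobi's formula `d(det C) = det C · tr(C⁻¹ dC)`
gives `∂ρ/∂C = -(ρ/2) C⁻¹`, and `F C⁻¹ Fᵀ = I` turns this term into `-ρ² g_ρ I`.
Homogeneity of degree zero gives Euler's relation `tr(G C) = 0`, and `tr(F G Fᵀ) = tr(G C)`. -/

section Calculus

variable {E F : Type*} [NormedAddCommGroup E] [NormedSpace ℝ E] [NormedAddCommGroup F]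
  [NormedSpace ℝ F]

theorem DifferentiableAt.fderiv_apply_self_eq_zero_of_smul_invariant {f : E → F} {x : E}
    (hf : DifferentiableAt ℝ f x) (hhom : ∀ t : ℝ, 0 < t → f (t • x) = f x) :
    fderiv ℝ f x x = 0 := by
  have hray : HasDerivAt (fun t : ℝ => f (t • x)) (fderiv ℝ f x x) 1 := by
    simpa [Function.comp_def] using hf.hasFDerivAt.comp_hasDerivAt_of_eq (1 : ℝ)
      ((hasDerivAt_id' (1 : ℝ)).smul_const x) (one_smul ℝ x).symm
  have hconst : (fun t : ℝ => f (t • x)) =ᶠ[nhds 1] fun _ => f x := by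
    filter_upwards [Ioi_mem_nhds one_pos] with t ht using hhom t ht
  exact hray.unique ((hasDerivAt_const (1 : ℝ) (f x)).congr_of_eventuallyEq hconst)

theorem DifferentiableAt.fderiv_apply_eq_deriv_add_fderiv {g : ℝ × E → F} {r : ℝ} {x : E}
    (hg : DifferentiableAt ℝ g (r, x)) (a : ℝ) (h : E) :
    fderiv ℝ g (r, x) (a, h) =
      a • deriv (fun s => g (s, x)) r + fderiv ℝ (fun y => g (r, y)) x h := by
  have hleft : HasFDerivAt (fun s => g (s, x)) _ r :=
    hg.hasFDerivAt.comp r (hasFDerivAt_prodMk_left r x)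
  have hright : HasFDerivAt (fun y => g (r, y)) _ x :=
    hg.hasFDerivAt.comp x (hasFDerivAt_prodMk_right r x)
  rw [hleft.hasDerivAt.deriv, hright.fderiv, ContinuousLinearMap.comp_apply,
    ContinuousLinearMap.comp_apply, ← map_smul, ← map_add]
  simp

theorem fderiv_comp_prodMk_apply {δ : E → ℝ} {g : ℝ × E → F} {x : E} {r : ℝ}
    (hδ : DifferentiableAt ℝ δ x) (hr : δ x = r) (hg : DifferentiableAt ℝ g (r, x)) (h : E) :
    fderiv ℝ (fun y => g (δ y, y)) x h =
      fderiv ℝ δ x h • deriv (fun s => g (s, x)) r + fderiv ℝ (fun y => g (r, y)) x h := by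
  subst hr
  have hcomp : HasFDerivAt (fun y => g (δ y, y)) _ x :=
    hg.hasFDerivAt.comp (f := fun y => (δ y, y)) x (hδ.hasFDerivAt.prodMk (hasFDerivAt_id x))
  rw [← hg.fderiv_apply_eq_deriv_add_fderiv, hcomp.fderiv]
  rfl

end Calculus

namespace Matrix

variable {n 𝕜 : Type*} [Fintype n] [DecidableEq n]

theorem hasDerivAt_det_one_add_smul [NontriviallyNormedField 𝕜] (M : Matrix n n 𝕜) :
    HasDerivAt (fun s : 𝕜 => det (1 + s • M)) (trace M) 0 := by
  have := (det (1 + (Polynomial.X : Polynomial 𝕜) • M.map Polynomial.C)).hasDerivAt 0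
  rw [derivative_det_one_add_X_smul] at this
  convert this using 2 with s
  simp [eval_det, ← smul_eq_mul_diagonal]

theorem hasLineDerivAt_det [NontriviallyNormedField 𝕜] {C : Matrix n n 𝕜} (hC : IsUnit C.det)
    (H : Matrix n n 𝕜) : HasLineDerivAt 𝕜 det (C.det * trace (C⁻¹ * H)) C H := by
  have hline : ∀ s : 𝕜, C + s • H = C * (1 + s • (C⁻¹ * H)) := fun s => by
    rw [Matrix.mul_add, Matrix.mul_one, Matrix.mul_smul, ← Matrix.mul_assoc,
      mul_nonsing_inv _ hC, Matrix.one_mul]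
  unfold HasLineDerivAt
  simp_rw [hline, det_mul]
  exact (hasDerivAt_det_one_add_smul _).const_mul _

theorem differentiable_det [NontriviallyNormedField 𝕜] :
    Differentiable 𝕜 (det : Matrix n n 𝕜 → 𝕜) := by
  change Differentiable 𝕜 fun M : Matrix n n 𝕜 => M.det
  simp_rw [det_apply]
  fun_prop

theorem fderiv_det_apply [NontriviallyNormedField 𝕜] {C : Matrix n n 𝕜} (hC : IsUnit C.det)
    (H : Matrix n n 𝕜) : fderiv 𝕜 det C H = C.det * trace (C⁻¹ * H) :=
  ((differentiable_det C).hasFDerivAt.hasLineDerivAt H).unique (hasLineDerivAt_det hC H)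

theorem fderiv_const_mul_det_rpow_apply {C : Matrix n n ℝ} (hC : C.det ≠ 0) (c p : ℝ)
    (H : Matrix n n ℝ) :
    fderiv ℝ (fun M : Matrix n n ℝ => c * M.det ^ p) C H =
      p * (c * C.det ^ p) * trace (C⁻¹ * H) := by
  have hpow := ((differentiable_det C).hasFDerivAt.rpow_const (p := p) (Or.inl hC)).const_mul c
  calc fderiv ℝ (fun M : Matrix n n ℝ => c * M.det ^ p) C H
      = c * (p * C.det ^ (p - 1) * fderiv ℝ det C H) := congrArg (· H) hpow.fderiv
    _ = p * (c * C.det ^ p) * trace (C⁻¹ * H) := by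
      rw [fderiv_det_apply hC.isUnit, Real.rpow_sub_one hC]
      field_simp

theorem mul_inv_transpose_mul_self_mul_transpose {R : Type*} [CommRing R] {F : Matrix n n R}
    (hF : IsUnit F.det) : F * (Fᵀ * F)⁻¹ * Fᵀ = 1 := by
  rw [mul_inv_rev, ← Matrix.mul_assoc, mul_nonsing_inv F hF, Matrix.one_mul,
    nonsing_inv_mul Fᵀ (by rwa [det_transpose])]

end Matrix

theorem stress_tensor_decomposition_general
    (ρ₀ : ℝ)
    (F : Matrix (Fin 3) (Fin 3) ℝ) (hF : IsUnit F)
    (C : Matrix (Fin 3) (Fin 3) ℝ) (hCdef : C = Fᵀ * F)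
    (ρ : ℝ) (hρdef : ρ = ρ₀ * C.det ^ (-(1 : ℝ) / 2))
    (g : ℝ × Matrix (Fin 3) (Fin 3) ℝ → ℝ)
    (hg : DifferentiableAt ℝ g (ρ, C))
    (hhom : ∀ r : ℝ, ∀ t : ℝ, 0 < t → ∀ M : Matrix (Fin 3) (Fin 3) ℝ,
      g (r, t • M) = g (r, M))
    (E G : Matrix (Fin 3) (Fin 3) ℝ)
    (hE : ∀ H : Matrix (Fin 3) (Fin 3) ℝ,
      fderiv ℝ (fun M : Matrix (Fin 3) (Fin 3) ℝ =>
        g (ρ₀ * M.det ^ (-(1 : ℝ) / 2), M)) C H = (E * H).trace)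
    (hG : ∀ H : Matrix (Fin 3) (Fin 3) ℝ,
      fderiv ℝ (fun M : Matrix (Fin 3) (Fin 3) ℝ => g (ρ, M)) C H = (G * H).trace)
    (gρ : ℝ) (hgρ : gρ = deriv (fun r : ℝ => g (r, C)) ρ)
    (σ p : _) (σ₁ : Matrix (Fin 3) (Fin 3) ℝ)
    (hσ : σ = (2 * ρ) • (F * E * Fᵀ))
    (hp : p = ρ ^ 2 * gρ)
    (hσ₁ : σ₁ = (2 * ρ) • (F * G * Fᵀ)) :
    σ = (-p) • (1 : Matrix (Fin 3) (Fin 3) ℝ) + σ₁ ∧ σ₁.trace = 0 := by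
  have hFdet : IsUnit F.det := (isUnit_iff_isUnit_det F).mp hF
  have hCdet : C.det ≠ 0 := by
    rw [hCdef, det_mul, det_transpose]
    exact mul_ne_zero hFdet.ne_zero hFdet.ne_zero
  have hdensity : DifferentiableAt ℝ
      (fun M : Matrix (Fin 3) (Fin 3) ℝ => ρ₀ * M.det ^ (-(1 : ℝ) / 2)) C :=
    (differentiable_det.differentiableAt.rpow_const (Or.inl hCdet)).const_mul ρ₀
  have hEH : ∀ H : Matrix (Fin 3) (Fin 3) ℝ, (E * H).trace =
      fderiv ℝ (fun M : Matrix (Fin 3) (Fin 3) ℝ => ρ₀ * M.det ^ (-(1 : ℝ) / 2)) C H * gρ +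
        (G * H).trace := fun H => by
    -- `hE`, `hG` use `instTopologicalSpaceMatrix`, the general lemma the norm topology; these
    -- agree only up to defeq, hence `exact` rather than `rw`.
    rw [← hE, ← hG, hgρ]
    exact fderiv_comp_prodMk_apply hdensity hρdef.symm hg H
  have hEG : E = (-(ρ * gρ) / 2) • C⁻¹ + G := by
    rw [ext_iff_trace_mul_right]
    intro H
    rw [hEH, fderiv_const_mul_det_rpow_apply hCdet, ← hρdef, Matrix.add_mul, trace_add,
      Matrix.smul_mul, trace_smul, smul_eq_mul]
    ring
  have hGC : (G * C).trace = 0 := by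
    rw [← hG]
    exact (hg.comp C (hasFDerivAt_prodMk_right ρ C).differentiableAt
      ).fderiv_apply_self_eq_zero_of_smul_invariant fun t ht => hhom ρ t ht C
  have hFCF : F * C⁻¹ * Fᵀ = 1 := hCdef ▸ mul_inv_transpose_mul_self_mul_transpose hFdet
  refine ⟨?_, ?_⟩
  · rw [hσ, hσ₁, hEG, Matrix.mul_add, Matrix.add_mul, Matrix.mul_smul, Matrix.smul_mul, hFCF,
      smul_add, smul_smul, hp]
    congr 2
    ring
  · rw [hσ₁, trace_smul, trace_mul_cycle, ← hCdef, trace_mul_comm, hGC, smul_zero]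

/-- Eqs. (9)–(11): canonical decomposition of the stress tensor `σ = 2ρ F (∂e/∂C) Fᵀ` into a
spherical part `-p I` with `p = ρ² g'_ρ` and a traceless deviatoric part `σ₁ = 2ρ F g'_C Fᵀ`. -/
theorem stress_tensor_decomposition
    (ρ₀ : ℝ) (hρ₀ : 0 < ρ₀)
    (F : Matrix (Fin 3) (Fin 3) ℝ) (hF : IsUnit F)
    (C : Matrix (Fin 3) (Fin 3) ℝ) (hCdef : C = Fᵀ * F)
    (ρ : ℝ) (hρdef : ρ = ρ₀ * C.det ^ (-(1 : ℝ) / 2))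
    (g : ℝ × Matrix (Fin 3) (Fin 3) ℝ → ℝ)
    (hg : DifferentiableAt ℝ g (ρ, C))
    (hhom : ∀ r : ℝ, ∀ t : ℝ, 0 < t → ∀ M : Matrix (Fin 3) (Fin 3) ℝ,
      g (r, t • M) = g (r, M))
    (E G : Matrix (Fin 3) (Fin 3) ℝ)
    (hE : ∀ H : Matrix (Fin 3) (Fin 3) ℝ,
      fderiv ℝ (fun M : Matrix (Fin 3) (Fin 3) ℝ =>
        g (ρ₀ * M.det ^ (-(1 : ℝ) / 2), M)) C H = (E * H).trace)
    (hG : ∀ H : Matrix (Fin 3) (Fin 3) ℝ,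
      fderiv ℝ (fun M : Matrix (Fin 3) (Fin 3) ℝ => g (ρ, M)) C H = (G * H).trace)
    (gρ : ℝ) (hgρ : gρ = deriv (fun r : ℝ => g (r, C)) ρ)
    (σ p : _) (σ₁ : Matrix (Fin 3) (Fin 3) ℝ)
    (hσ : σ = (2 * ρ) • (F * E * Fᵀ))
    (hp : p = ρ ^ 2 * gρ)
    (hσ₁ : σ₁ = (2 * ρ) • (F * G * Fᵀ)) :
    σ = (-p) • (1 : Matrix (Fin 3) (Fin 3) ℝ) + σ₁ ∧ σ₁.trace = 0 :=
  stress_tensor_decomposition_general ρ₀ F hF C hCdef ρ hρdef g hg hhom E G hE hG gρ hgρ σ p σ₁ hσ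
    hp hσ₁
end

section
/- Kinematic identity Ḟ = (∂V/∂x) F. Let E = EuclideanSpace ℝ (Fin 3), let φ : ℝ × E → E be twice continuously differentiable, and let V : ℝ × E → E be such that V(t, φ(t, X)) = ∂φ/∂t (t, X) for all (t, X), with V(t, ·) differentiable at φ(t, X). Then, for every (t, X), the time derivative of the map t ↦ D_X φ(t, ·)(X) (the spatial Fréchet derivative of φ(t, ·) at X) exists and equals the composition D_x V(t, ·)(φ(t, X)) ∘ D_X φ(t, ·)(X). -/
/-!
The deformation gradient `F = D_X φ(t, ·)` is a partial derivative of `φ`, so `Ḟ` is a mixed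
second partial derivative `∂_t D_X φ`. By symmetry of the second derivative this equals
`D_X (∂_t φ) = D_X (V (t, φ (t, ·)))`, which the chain rule expands to `D_x V ∘ F`.
-/

open ContinuousLinearMap

section PartialDerivatives

variable {𝕜 E F : Type*} [NontriviallyNormedField 𝕜] [NormedAddCommGroup E] [NormedSpace 𝕜 E]
  [NormedAddCommGroup F] [NormedSpace 𝕜 F] {φ : 𝕜 × E → F} {t : 𝕜} {x : E}

theorem DifferentiableAt.hasFDerivAt_comp_prodMk_right (h : DifferentiableAt 𝕜 φ (t, x)) :
    HasFDerivAt (fun y => φ (t, y)) ((fderiv 𝕜 φ (t, x)).comp (inr 𝕜 𝕜 E)) x :=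
  h.hasFDerivAt.comp x (hasFDerivAt_prodMk_right t x)

theorem DifferentiableAt.hasDerivAt_comp_prodMk_left (h : DifferentiableAt 𝕜 φ (t, x)) :
    HasDerivAt (fun τ => φ (τ, x)) (fderiv 𝕜 φ (t, x) (1, 0)) t :=
  (h.hasFDerivAt.comp t (hasFDerivAt_prodMk_left (𝕜 := 𝕜) t x)).hasDerivAt

theorem hasDerivAt_fderiv_comp_prodMk_right (hφ : Differentiable 𝕜 φ)
    (hDφ : DifferentiableAt 𝕜 (fderiv 𝕜 φ) (t, x)) :
    HasDerivAt (fun τ => fderiv 𝕜 (fun y => φ (τ, y)) x)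
      ((fderiv 𝕜 (fderiv 𝕜 φ) (t, x) (1, 0)).comp (inr 𝕜 𝕜 E)) t := by
  simp only [fun τ => (hφ (τ, x)).hasFDerivAt_comp_prodMk_right.fderiv]
  simpa using hDφ.hasDerivAt_comp_prodMk_left.clm_comp (hasDerivAt_const t (inr 𝕜 𝕜 E))

theorem hasFDerivAt_deriv_comp_prodMk_left (hφ : Differentiable 𝕜 φ)
    (hDφ : DifferentiableAt 𝕜 (fderiv 𝕜 φ) (t, x)) (hsymm : IsSymmSndFDerivAt 𝕜 φ (t, x)) :
    HasFDerivAt (fun y => deriv (fun τ => φ (τ, y)) t)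
      ((fderiv 𝕜 (fderiv 𝕜 φ) (t, x) (1, 0)).comp (inr 𝕜 𝕜 E)) x := by
  simp only [fun y => (hφ (t, y)).hasDerivAt_comp_prodMk_left.deriv]
  refine ((apply 𝕜 F ((1 : 𝕜), (0 : E))).hasFDerivAt.comp x
    hDφ.hasFDerivAt_comp_prodMk_right).congr_fderiv ?_
  ext v
  simp [hsymm (1, 0) (0, v)]

end PartialDerivatives

/-- Kinematic identity `Ḟ = (∂V/∂x) F`: the time derivative of the deformation gradient
`F = D_X φ(t,·)(X)` equals the spatial velocity gradient composed with `F`. -/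
theorem deriv_deformation_gradient
    (φ : ℝ × EuclideanSpace ℝ (Fin 3) → EuclideanSpace ℝ (Fin 3))
    (hφ : ContDiff ℝ 2 φ)
    (V : ℝ × EuclideanSpace ℝ (Fin 3) → EuclideanSpace ℝ (Fin 3))
    (hV : ∀ (t : ℝ) (X : EuclideanSpace ℝ (Fin 3)),
      V (t, φ (t, X)) = deriv (fun τ : ℝ => φ (τ, X)) t)
    (hVdiff : ∀ (t : ℝ) (X : EuclideanSpace ℝ (Fin 3)),
      DifferentiableAt ℝ (fun y => V (t, y)) (φ (t, X))) :
    ∀ (t : ℝ) (X : EuclideanSpace ℝ (Fin 3)),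
      HasDerivAt (fun τ : ℝ => fderiv ℝ (fun Y => φ (τ, Y)) X)
        ((fderiv ℝ (fun y => V (t, y)) (φ (t, X))).comp
          (fderiv ℝ (fun Y => φ (t, Y)) X)) t := by
  intro t X
  have hφ' : Differentiable ℝ φ := hφ.differentiable two_ne_zero
  have hDφ : Differentiable ℝ (fderiv ℝ φ) :=
    (hφ.fderiv_right le_rfl).differentiable one_ne_zero
  have hsymm : IsSymmSndFDerivAt ℝ φ (t, X) :=
    hφ.contDiffAt.isSymmSndFDerivAt (by simp [minSmoothness_of_isRCLikeNormedField])
  have hF := (hφ' (t, X)).hasFDerivAt_comp_prodMk_right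
  have hchain : HasFDerivAt (fun Y => deriv (fun τ => φ (τ, Y)) t)
      ((fderiv ℝ (fun y => V (t, y)) (φ (t, X))).comp (fderiv ℝ (fun Y => φ (t, Y)) X)) X := by
    simp only [← hV, hF.fderiv]
    exact (hVdiff t X).hasFDerivAt.comp X hF
  rw [hchain.unique (hasFDerivAt_deriv_comp_prodMk_left hφ' (hDφ (t, X)) hsymm)]
  exact hasDerivAt_fderiv_comp_prodMk_right hφ' (hDφ (t, X))
end

section
/- Clebsch potentials yield the momentum equation (fluid case of the potential equations (16)). Let E = EuclideanSpace ℝ (Fin 3). Let λ, s : ℝ × E → ℝ be twice continuously differentiable, let ψ, h, Ω, θ : ℝ × E → ℝ with ψ continuously differentiable, and let V : ℝ × E → E be continuously differentiable. For a scalar field f, write ḟ = ∂f/∂t + ⟪∇_x f, V⟫ for its material derivative, where ∇_x f is the spatial gradient. Assume for all (t, x): (i) V = ∇_x λ + ψ ∇_x s (Clebsch representation); (ii) λ̇ = (1/2)‖V‖² - h - Ω; (iii) ψ̇ = θ; (iv) ṡ = 0. Then the momentum equation holds: Γ + ∇_x(h + Ω) - θ ∇_x s = 0, where Γ(t, x)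 = ∂V/∂t (t, x) + (D_x V)(t, x)(V(t, x)) is the material acceleration. -/
/-!
Everything is expressed through full space-time derivatives on `ℝ × E`, where `ḟ = Df (1, V)`.
Pairing (i) with a spatial vector `u` gives `⟪V, u⟫ = Dλ (0, u) + ψ Ds (0, u)`; differentiating
this along `(1, V)` computes `⟪Γ, u⟫`, and by (ii) `h + Ω = ½‖V‖² - λ̇` can be differentiated in
space. In the sum the second derivatives of `λ` cancel by the symmetry of `D²λ`, those of `s`
combine (by the symmetry of `D²s`) into `ψ ⟪∇ṡ, u⟫ = 0` by (iv), and what remains is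
`ψ̇ ⟪∇s, u⟫ = θ ⟪∇s, u⟫` by (iii).
-/

open ContinuousLinearMap

section MaterialDerivative

variable {E F : Type*} [NormedAddCommGroup E] [NormedSpace ℝ E]
  [NormedAddCommGroup F] [NormedSpace ℝ F]

/-- The paper's `ḟ`: the space-time derivative of `f` in the direction `(1, V)`. -/
noncomputable def materialDeriv (f : ℝ × E → F) (V : ℝ × E → E) (p : ℝ × E) : F :=
  fderiv ℝ f p (1, V p)

theorem fderiv_comp_prodMk_right_apply {f : ℝ × E → F} {t : ℝ} {x : E}
    (hf : DifferentiableAt ℝ f (t, x)) (v : E) :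
    fderiv ℝ (fun y => f (t, y)) x v = fderiv ℝ f (t, x) (0, v) := by
  have hslice : HasFDerivAt (fun y => f (t, y)) ((fderiv ℝ f (t, x)).comp (inr ℝ ℝ E)) x :=
    hf.hasFDerivAt.comp x (hasFDerivAt_prodMk_right t x)
  rw [hslice.fderiv, comp_apply, inr_apply]

theorem deriv_comp_prodMk_left {f : ℝ × E → F} {t : ℝ} {x : E}
    (hf : DifferentiableAt ℝ f (t, x)) :
    deriv (fun τ => f (τ, x)) t = fderiv ℝ f (t, x) (1, 0) := by
  have hslice : HasFDerivAt (fun τ => f (τ, x)) ((fderiv ℝ f (t, x)).comp (inl ℝ ℝ E)) t :=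
    hf.hasFDerivAt.comp t (hasFDerivAt_prodMk_left t x)
  rw [hslice.hasDerivAt.deriv, comp_apply, inl_apply]

theorem materialDeriv_eq_deriv_add_fderiv {f : ℝ × E → F} (V : ℝ × E → E) {t : ℝ} {x : E}
    (hf : DifferentiableAt ℝ f (t, x)) :
    materialDeriv f V (t, x)
      = deriv (fun τ => f (τ, x)) t + fderiv ℝ (fun y => f (t, y)) x (V (t, x)) := by
  rw [deriv_comp_prodMk_left hf, fderiv_comp_prodMk_right_apply hf, ← map_add, Prod.mk_add_mk,
    add_zero, zero_add, materialDeriv]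

variable {f : ℝ × E → F} {V : ℝ × E → E} {p : ℝ × E}

theorem DifferentiableAt.materialDeriv (hf : DifferentiableAt ℝ (fderiv ℝ f) p)
    (hV : DifferentiableAt ℝ V p) : DifferentiableAt ℝ (materialDeriv f V) p :=
  hf.clm_apply ((differentiableAt_const 1).prodMk hV)

theorem fderiv_materialDeriv_apply (hf : DifferentiableAt ℝ (fderiv ℝ f) p)
    (hV : DifferentiableAt ℝ V p) (w : ℝ × E) :
    fderiv ℝ (materialDeriv f V) p w
      = fderiv ℝ (fderiv ℝ f) p w (1, V p) + fderiv ℝ f p (0, fderiv ℝ V p w) := by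
  change fderiv ℝ (fun q => fderiv ℝ f q (1, V q)) p w = _
  rw [fderiv_clm_apply hf ((differentiableAt_const 1).prodMk hV),
    DifferentiableAt.fderiv_prodMk (differentiableAt_const 1) hV]
  simp [add_comm]

end MaterialDerivative

section Gradient

variable {E : Type*} [NormedAddCommGroup E] [InnerProductSpace ℝ E] [CompleteSpace E]
  {f : ℝ × E → ℝ} {t : ℝ} {x : E}

theorem inner_gradient_comp_prodMk_right (hf : DifferentiableAt ℝ f (t, x)) (v : E) :
    inner ℝ (gradient (fun y => f (t, y)) x) v = fderiv ℝ f (t, x) (0, v) := by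
  rw [inner_gradient_left, fderiv_comp_prodMk_right_apply hf]

theorem materialDeriv_eq_deriv_add_inner_gradient (V : ℝ × E → E)
    (hf : DifferentiableAt ℝ f (t, x)) :
    materialDeriv f V (t, x)
      = deriv (fun τ => f (τ, x)) t + inner ℝ (gradient (fun y => f (t, y)) x) (V (t, x)) := by
  rw [inner_gradient_left, materialDeriv_eq_deriv_add_fderiv V hf]

end Gradient

section Clebsch

variable {E : Type*} [NormedAddCommGroup E] [InnerProductSpace ℝ E]
  {lam s ψ : ℝ × E → ℝ} {V : ℝ × E → E} {p : ℝ × E}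

theorem inner_fderiv_of_clebsch
    (hclebsch : ∀ q u, inner ℝ (V q) u = fderiv ℝ lam q (0, u) + ψ q * fderiv ℝ s q (0, u))
    (hV : DifferentiableAt ℝ V p) (hψ : DifferentiableAt ℝ ψ p)
    (hlam : DifferentiableAt ℝ (fderiv ℝ lam) p) (hs : DifferentiableAt ℝ (fderiv ℝ s) p)
    (u : E) (w : ℝ × E) :
    inner ℝ (fderiv ℝ V p w) u = fderiv ℝ (fderiv ℝ lam) p w (0, u)
      + fderiv ℝ ψ p w * fderiv ℝ s p (0, u) + ψ p * fderiv ℝ (fderiv ℝ s) p w (0, u) := by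
  have hs_u : DifferentiableAt ℝ (fun q => fderiv ℝ s q (0, u)) p :=
    hs.clm_apply (differentiableAt_const _)
  have hψs_u : DifferentiableAt ℝ (fun q => ψ q * fderiv ℝ s q (0, u)) p := hψ.mul hs_u
  have key := congrArg (fun g => fderiv ℝ g p w) (funext fun q => hclebsch q u)
  rw [fderiv_inner_apply ℝ hV (differentiableAt_const u),
    fderiv_fun_add (hlam.clm_apply (differentiableAt_const _)) hψs_u,
    fderiv_fun_mul hψ hs_u, fderiv_clm_apply hlam (differentiableAt_const _),
    fderiv_clm_apply hs (differentiableAt_const _)] at key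
  simp at key
  linear_combination key

theorem fderiv_half_norm_sq_sub_materialDeriv_apply (hV : DifferentiableAt ℝ V p)
    (hlam : DifferentiableAt ℝ (fderiv ℝ lam) p) (w : ℝ × E) :
    fderiv ℝ (fun q => (1 / 2 : ℝ) * ‖V q‖ ^ 2 - materialDeriv lam V q) p w
      = inner ℝ (V p) (fderiv ℝ V p w)
        - (fderiv ℝ (fderiv ℝ lam) p w (1, V p) + fderiv ℝ lam p (0, fderiv ℝ V p w)) := by
  rw [fderiv_fun_sub ((hV.norm_sq ℝ).const_mul _) (hlam.materialDeriv hV),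
    fderiv_const_mul (hV.norm_sq ℝ), hV.hasFDerivAt.norm_sq.fderiv]
  simp [fderiv_materialDeriv_apply hlam hV]

theorem inner_materialDeriv_self_of_clebsch
    (hclebsch : ∀ q u, inner ℝ (V q) u = fderiv ℝ lam q (0, u) + ψ q * fderiv ℝ s q (0, u))
    (hs_cons : ∀ q, materialDeriv s V q = 0)
    (hV : DifferentiableAt ℝ V p) (hψ : DifferentiableAt ℝ ψ p)
    (hlam : DifferentiableAt ℝ (fderiv ℝ lam) p) (hs : DifferentiableAt ℝ (fderiv ℝ s) p)
    (hlam_symm : IsSymmSndFDerivAt ℝ lam p) (hs_symm : IsSymmSndFDerivAt ℝ s p) (v : E) :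
    inner ℝ (materialDeriv V V p) v = materialDeriv ψ V p * fderiv ℝ s p (0, v)
      - fderiv ℝ (fun q => (1 / 2 : ℝ) * ‖V q‖ ^ 2 - materialDeriv lam V q) p (0, v) := by
  have hΓ := inner_fderiv_of_clebsch hclebsch hV hψ hlam hs v (1, V p)
  have hB := fderiv_half_norm_sq_sub_materialDeriv_apply hV hlam (0, v)
  have hV_pair := hclebsch p (fderiv ℝ V p (0, v))
  have hs_cons_deriv := fderiv_materialDeriv_apply hs hV (0, v)
  rw [show materialDeriv s V = fun _ => 0 from funext hs_cons, fderiv_const_apply,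
    zero_apply] at hs_cons_deriv
  change inner ℝ (fderiv ℝ V p (1, V p)) v = fderiv ℝ ψ p (1, V p) * _ - _
  linear_combination hΓ + hB + hV_pair - ψ p * hs_cons_deriv + hlam_symm (1, V p) (0, v)
    + ψ p * hs_symm (1, V p) (0, v)

end Clebsch
/-- Fluid case of the potential equations (16): a velocity field admitting the Clebsch
representation `V = ∇λ + ψ ∇s`, with `λ̇ = (1/2)‖V‖² - h - Ω`, `ψ̇ = θ` and `ṡ = 0`,
satisfies the Euler momentum equation `Γ + ∇(h + Ω) - θ ∇s = 0`. -/
theorem clebsch_potentials_yield_momentum_equation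
    (lam s : ℝ × EuclideanSpace ℝ (Fin 3) → ℝ)
    (hlam : ContDiff ℝ 2 lam) (hs : ContDiff ℝ 2 s)
    (ψ h Ω θ : ℝ × EuclideanSpace ℝ (Fin 3) → ℝ) (hψ : ContDiff ℝ 1 ψ)
    (V : ℝ × EuclideanSpace ℝ (Fin 3) → EuclideanSpace ℝ (Fin 3)) (hV : ContDiff ℝ 1 V)
    -- (i) Clebsch representation
    (hi : ∀ (t : ℝ) (x : EuclideanSpace ℝ (Fin 3)),
      V (t, x) = gradient (fun y => lam (t, y)) x + ψ (t, x) • gradient (fun y => s (t, y)) x)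
    -- (ii) evolution of λ
    (hii : ∀ (t : ℝ) (x : EuclideanSpace ℝ (Fin 3)),
      deriv (fun τ : ℝ => lam (τ, x)) t +
          inner ℝ (gradient (fun y => lam (t, y)) x) (V (t, x)) =
        (1 / 2 : ℝ) * ‖V (t, x)‖ ^ 2 - h (t, x) - Ω (t, x))
    -- (iii) evolution of ψ
    (hiii : ∀ (t : ℝ) (x : EuclideanSpace ℝ (Fin 3)),
      deriv (fun τ : ℝ => ψ (τ, x)) t +
          inner ℝ (gradient (fun y => ψ (t, y)) x) (V (t, x)) = θ (t, x))
    -- (iv) entropy conservation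
    (hiv : ∀ (t : ℝ) (x : EuclideanSpace ℝ (Fin 3)),
      deriv (fun τ : ℝ => s (τ, x)) t +
          inner ℝ (gradient (fun y => s (t, y)) x) (V (t, x)) = (0 : ℝ)) :
    ∀ (t : ℝ) (x : EuclideanSpace ℝ (Fin 3)),
      (deriv (fun τ : ℝ => V (τ, x)) t + fderiv ℝ (fun y => V (t, y)) x (V (t, x))) +
          gradient (fun y => h (t, y) + Ω (t, y)) x -
          θ (t, x) • gradient (fun y => s (t, y)) x = 0 := by
  have dlam : Differentiable ℝ lam := hlam.differentiable (by norm_num)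
  have ds : Differentiable ℝ s := hs.differentiable (by norm_num)
  have dψ : Differentiable ℝ ψ := hψ.differentiable (by norm_num)
  have dV : Differentiable ℝ V := hV.differentiable (by norm_num)
  have dDlam : Differentiable ℝ (fderiv ℝ lam) :=
    (hlam.fderiv_right (m := 1) (by norm_num)).differentiable (by norm_num)
  have dDs : Differentiable ℝ (fderiv ℝ s) :=
    (hs.fderiv_right (m := 1) (by norm_num)).differentiable (by norm_num)
  have hclebsch : ∀ q u, inner ℝ (V q) u = fderiv ℝ lam q (0, u) + ψ q * fderiv ℝ s q (0, u) := by
    rintro ⟨t, x⟩ u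
    rw [hi, inner_add_left, real_inner_smul_left, inner_gradient_comp_prodMk_right (dlam _),
      inner_gradient_comp_prodMk_right (ds _)]
  have hs_cons : ∀ q, materialDeriv s V q = 0 := by
    rintro ⟨t, x⟩
    rw [materialDeriv_eq_deriv_add_inner_gradient V (ds _), hiv]
  intro t x
  have hbernoulli : (fun y => h (t, y) + Ω (t, y))
      = fun y => (1 / 2 : ℝ) * ‖V (t, y)‖ ^ 2 - materialDeriv lam V (t, y) := by
    funext y
    linarith [hii t y, materialDeriv_eq_deriv_add_inner_gradient V (dlam (t, y))]
  have hθ : θ (t, x) = materialDeriv ψ V (t, x) := by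
    rw [materialDeriv_eq_deriv_add_inner_gradient V (dψ _), hiii]
  have dB : DifferentiableAt ℝ (fun q => (1 / 2 : ℝ) * ‖V q‖ ^ 2 - materialDeriv lam V q) (t, x) :=
    ((dV _).norm_sq ℝ |>.const_mul _).sub ((dDlam _).materialDeriv (dV _))
  refine ext_inner_right ℝ fun v => ?_
  rw [hbernoulli, ← materialDeriv_eq_deriv_add_fderiv V (dV _), inner_sub_left, inner_add_left,
    real_inner_smul_left, inner_gradient_comp_prodMk_right dB,
    inner_gradient_comp_prodMk_right (ds _), hθ, inner_zero_left,
    inner_materialDeriv_self_of_clebsch hclebsch hs_cons (dV _) (dψ _) (dDlam _) (dDs _)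
      (hlam.contDiffAt.isSymmSndFDerivAt (by simp)) (hs.contDiffAt.isSymmSndFDerivAt (by simp))]
  ring
end
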